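/- Let U and B̄ be 2×2 real symmetric matrices. Then the proximal-point term X ↦ tr((X − B̄)²·(U − X)⁻¹) is convex on the convex set S = {X : X is a 2×2 real symmetric matrix and U − X is positive definite}. -/

import Mathlib

open Matrix

section helpers
variable {n : Type*} [Fintype n] [DecidableEq n]

lemma myPosDef_comb {P Q : Matrix n n ℝ} (hP : P.PosDef) (hQ : Q.PosDef)
    {a b : ℝ} (ha : 0 ≤ a) (hb : 0 ≤ b) (hab : a + b = 1) :
    (a • P + b • Q).PosDef := by
  refine posDef_iff_dotProduct_mulVec.mpr ⟨?_, ?_⟩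
  · show _ = _
    rw [conjTranspose_add, conjTranspose_smul, conjTranspose_smul, hP.1.eq, hQ.1.eq]
    norm_num
  · intro x hx
    have h1 : 0 < star x ⬝ᵥ P *ᵥ x := hP.dotProduct_mulVec_pos hx
    have h2 : 0 < star x ⬝ᵥ Q *ᵥ x := hQ.dotProduct_mulVec_pos hx
    have : star x ⬝ᵥ (a • P + b • Q) *ᵥ x
        = a * (star x ⬝ᵥ P *ᵥ x) + b * (star x ⬝ᵥ Q *ᵥ x) := by
      simp [add_mulVec, smul_mulVec, dotProduct_add, dotProduct_smul]
    rw [this]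
    rcases eq_or_lt_of_le ha with h | h
    · have : b = 1 := by linarith
      simpa [← h, this] using h2
    · nlinarith

lemma key_ineq {A : Matrix n n ℝ} (hA : A.PosDef) (u c : n → ℝ) :
    2 * (u ⬝ᵥ c) - u ⬝ᵥ A *ᵥ u ≤ c ⬝ᵥ A⁻¹ *ᵥ c := by
  have hAt : Aᵀ = A := by
    have := hA.1
    simpa [Matrix.IsHermitian, conjTranspose_eq_transpose_of_trivial] using this
  set v := A⁻¹ *ᵥ c with hv
  have hAv : A *ᵥ v = c := by
    rw [hv, mulVec_mulVec, mul_nonsing_inv _ hA.det_pos.ne'.isUnit, one_mulVec]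
  have hw : 0 ≤ (u - v) ⬝ᵥ A *ᵥ (u - v) := by
    have := hA.posSemidef.dotProduct_mulVec_nonneg (u - v)
    simpa using this
  have e1 : v ⬝ᵥ A *ᵥ u = c ⬝ᵥ u := by
    rw [dotProduct_mulVec, ← mulVec_transpose, hAt, hAv]
  have e2 : u ⬝ᵥ A *ᵥ v = u ⬝ᵥ c := by rw [hAv]
  have e3 : v ⬝ᵥ A *ᵥ v = c ⬝ᵥ A⁻¹ *ᵥ c := by
    rw [hAv]; exact dotProduct_comm _ _
  have e4 : c ⬝ᵥ u = u ⬝ᵥ c := dotProduct_comm _ _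
  have expand : (u - v) ⬝ᵥ A *ᵥ (u - v)
      = u ⬝ᵥ A *ᵥ u - u ⬝ᵥ A *ᵥ v - v ⬝ᵥ A *ᵥ u + v ⬝ᵥ A *ᵥ v := by
    rw [mulVec_sub]
    simp [dotProduct_sub, sub_dotProduct]
    ring
  rw [expand, e1, e2, e3, e4] at hw
  linarith

lemma convex_S (U : Matrix n n ℝ) :
    Convex ℝ {X : Matrix n n ℝ | Xᵀ = X ∧ (U - X).PosDef} := by
  intro X hX Y hY a b ha hb hab
  have hUZ : U - (a • X + b • Y) = a • (U - X) + b • (U - Y) := by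
    ext i j
    simp only [Matrix.sub_apply, Matrix.add_apply, Matrix.smul_apply, smul_eq_mul]
    linear_combination (U i j) * hab.symm
  refine ⟨?_, ?_⟩
  · rw [transpose_add, transpose_smul, transpose_smul, hX.1, hY.1]
  · rw [hUZ]
    exact myPosDef_comb hX.2 hY.2 ha hb hab

lemma comb_eq (U X Y : Matrix n n ℝ) {a b : ℝ} (hab : a + b = 1) :
    U - (a • X + b • Y) = a • (U - X) + b • (U - Y) := by
  ext i j
  simp only [Matrix.sub_apply, Matrix.add_apply, Matrix.smul_apply, smul_eq_mul]
  linear_combination (U i j) * hab.symm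

lemma quad_conv (U : Matrix n n ℝ) (c : n → ℝ) :
    ConvexOn ℝ {X : Matrix n n ℝ | Xᵀ = X ∧ (U - X).PosDef}
      (fun X => c ⬝ᵥ (U - X)⁻¹ *ᵥ c) := by
  refine ⟨convex_S U, ?_⟩
  intro X hX Y hY a b ha hb hab
  have hZ := convex_S U hX hY ha hb hab
  set Z := a • X + b • Y with hZdef
  have hUZ := comb_eq U X Y hab
  set u := (U - Z)⁻¹ *ᵥ c with hu
  have hMu : (U - Z) *ᵥ u = c := by
    rw [hu, mulVec_mulVec, mul_nonsing_inv _ hZ.2.det_pos.ne'.isUnit, one_mulVec]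
  have h1 : c ⬝ᵥ (U - Z)⁻¹ *ᵥ c = 2 * (u ⬝ᵥ c) - u ⬝ᵥ (U - Z) *ᵥ u := by
    rw [← hu, hMu, dotProduct_comm]; ring
  have h2 : u ⬝ᵥ (U - Z) *ᵥ u
      = a * (u ⬝ᵥ (U - X) *ᵥ u) + b * (u ⬝ᵥ (U - Y) *ᵥ u) := by
    rw [hUZ]
    simp [add_mulVec, smul_mulVec, dotProduct_add, dotProduct_smul]
  have k1 := mul_le_mul_of_nonneg_left (key_ineq hX.2 u c) ha
  have k2 := mul_le_mul_of_nonneg_left (key_ineq hY.2 u c) hb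
  simp only [smul_eq_mul]
  rw [h1, h2]
  have hsplit : 2 * (u ⬝ᵥ c) - (a * (u ⬝ᵥ (U - X) *ᵥ u) + b * (u ⬝ᵥ (U - Y) *ᵥ u))
      = a * (2 * (u ⬝ᵥ c) - u ⬝ᵥ (U - X) *ᵥ u) + b * (2 * (u ⬝ᵥ c) - u ⬝ᵥ (U - Y) *ᵥ u) := by
    linear_combination (-2 * (u ⬝ᵥ c)) * hab
  rw [hsplit]
  exact add_le_add k1 k2

lemma row_quad (C M : Matrix n n ℝ) (k : n) :
    (C * M * Cᵀ) k k = (fun i => C k i) ⬝ᵥ M *ᵥ (fun i => C k i) := by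
  simp only [mul_apply, transpose_apply, dotProduct, mulVec, Finset.sum_mul, Finset.mul_sum]
  rw [Finset.sum_comm]
  refine Finset.sum_congr rfl fun i _ => Finset.sum_congr rfl fun j _ => by ring

lemma trace_rows {C : Matrix n n ℝ} (hC : Cᵀ = C) (M : Matrix n n ℝ) :
    (C * C * M).trace = ∑ k, (fun i => C k i) ⬝ᵥ M *ᵥ (fun i => C k i) := by
  have : (C * M * Cᵀ).trace = (C * C * M).trace := by
    rw [hC, trace_mul_cycle]
  rw [← this]
  rw [Matrix.trace]
  exact Finset.sum_congr rfl fun k _ => row_quad C M k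

lemma decomp {W U B : Matrix n n ℝ} (h : (U - W).PosDef) :
    ((W - B) ^ 2 * (U - W)⁻¹).trace
      = ((U - B) * (U - B) * (U - W)⁻¹).trace + (U - W).trace - 2 * (U - B).trace := by
  set Y := U - W with hY
  set C := U - B with hC
  have hdet : IsUnit Y.det := h.det_pos.ne'.isUnit
  have hWB : W - B = C - Y := by rw [hC, hY]; abel
  rw [hWB, pow_two]
  have hexp : (C - Y) * (C - Y) * Y⁻¹
      = C * C * Y⁻¹ - C * (Y * Y⁻¹) - Y * C * Y⁻¹ + Y * (Y * Y⁻¹) := by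
    noncomm_ring
  rw [hexp, mul_nonsing_inv _ hdet]
  have h2 : (Y * C * Y⁻¹).trace = C.trace := by
    rw [trace_mul_cycle, nonsing_inv_mul _ hdet, one_mul]
  rw [trace_add, trace_sub, trace_sub, h2, mul_one, mul_one]
  ring

end helpers


/-- For 2×2 real symmetric matrices `U` and `B̄`, the proximal-point term
`X ↦ tr ((X - B̄)² * (U - X)⁻¹)` is convex on the convex set
`S = {X | X symmetric and U - X positive definite}`. -/
theorem stmt1 (U B : Matrix (Fin 2) (Fin 2) ℝ) (hU : Uᵀ = U) (hB : Bᵀ = B) :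
    ConvexOn ℝ {X : Matrix (Fin 2) (Fin 2) ℝ | Xᵀ = X ∧ (U - X).PosDef}
      (fun X => ((X - B) ^ 2 * (U - X)⁻¹).trace) := by
  have hCt : (U - B)ᵀ = U - B := by rw [transpose_sub, hU, hB]
  set S := {X : Matrix (Fin 2) (Fin 2) ℝ | Xᵀ = X ∧ (U - X).PosDef} with hS
  -- convexity of the quadratic part
  have hq : ConvexOn ℝ S (fun X => ((U - B) * (U - B) * (U - X)⁻¹).trace) := by
    have heq : (fun X : Matrix (Fin 2) (Fin 2) ℝ =>
        ((U - B) * (U - B) * (U - X)⁻¹).trace)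
        = fun X => ∑ k, (fun i => (U - B) k i) ⬝ᵥ (U - X)⁻¹ *ᵥ (fun i => (U - B) k i) := by
      funext X
      exact trace_rows hCt _
    rw [heq]
    simp only [Fin.sum_univ_two]
    exact (quad_conv U _).add (quad_conv U _)
  refine ⟨convex_S U, ?_⟩
  intro X hX Y hY a b ha hb hab
  have hZ := convex_S U hX hY ha hb hab
  have hUZ := comb_eq U X Y hab
  have hg := hq.2 hX hY ha hb hab
  have htr : (U - (a • X + b • Y)).trace = a * (U - X).trace + b * (U - Y).trace := by
    rw [hUZ, trace_add, trace_smul, trace_smul]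
    simp
  simp only [smul_eq_mul] at hg ⊢
  rw [decomp hZ.2, decomp hX.2, decomp hY.2, htr]
  have h3 : a * (2 * (U - B).trace) + b * (2 * (U - B).trace) = 2 * (U - B).trace := by
    linear_combination (2 * (U - B).trace) * hab
  linarith [hg, h3]
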